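/- For 0 ≤ δ ≤ φ < π/2, both earth pressure coefficients K_act and K_pass are positive. In particular K_act ≥ 2sec²φ(1 - sinφ) - 1 > 0. -/

import Mathlib

/-!
Write `s = sin φ`, `c = cos φ`. Since `sec² δ ≥ 1`, the radicand is at most `1 - c² = s²`, so the
square root is at most `s` and `K_act ≥ 2 (1 - s) / c² - 1`. Using `c² = (1 - s)(1 + s)`, this
lower bound equals `(1 - s) / (1 + s)`, which is positive because `|s| < 1`; finally
`K_pass ≥ K_act` as the square root is nonnegative.
-/

open Real

lemma Real.one_le_inv_cos_sq {x : ℝ} (hx : cos x ≠ 0) : 1 ≤ (1 / cos x) ^ 2 := by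
  rw [div_pow, one_pow]
  exact one_le_one_div (by positivity) (cos_sq_le_one x)

lemma Real.abs_sin_lt_one_of_cos_ne_zero {x : ℝ} (hx : cos x ≠ 0) : |sin x| < 1 := by
  rw [← sq_lt_one_iff_abs_lt_one, sin_sq]
  have : 0 < cos x ^ 2 := by positivity
  linarith

lemma Real.two_mul_inv_cos_sq_mul_one_sub_sin_sub_one {x : ℝ} (hx : cos x ≠ 0) :
    2 * (1 / cos x) ^ 2 * (1 - sin x) - 1 = (1 - sin x) / (1 + sin x) := by
  have hsin := abs_lt.mp (abs_sin_lt_one_of_cos_ne_zero hx)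
  have hcos : cos x ^ 2 = (1 - sin x) * (1 + sin x) := by rw [cos_sq']; ring
  have hsub : 1 - sin x ≠ 0 := by linarith
  have hadd : 1 + sin x ≠ 0 := by linarith
  rw [div_pow, one_pow, hcos]
  field_simp
  ring

lemma Real.sqrt_one_sub_cos_sq_mul_inv_cos_sq_le_abs_sin (x : ℝ) {y : ℝ} (hy : cos y ≠ 0) :
    √(1 - cos x ^ 2 * (1 / cos y) ^ 2) ≤ |sin x| := by
  rw [← sqrt_sq_eq_abs, sin_sq]
  apply sqrt_le_sqrt
  nlinarith [one_le_inv_cos_sq hy, sq_nonneg (cos x)]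

theorem earth_pressure_positive (φ δ : ℝ) (h0 : 0 ≤ δ) (h1 : δ ≤ φ)
    (h2 : φ < Real.pi / 2) :
    let Kact : ℝ := 2 * (1 / Real.cos φ) ^ 2 *
      (1 - Real.sqrt (1 - Real.cos φ ^ 2 * (1 / Real.cos δ) ^ 2)) - 1
    let Kpass : ℝ := 2 * (1 / Real.cos φ) ^ 2 *
      (1 + Real.sqrt (1 - Real.cos φ ^ 2 * (1 / Real.cos δ) ^ 2)) - 1
    2 * (1 / Real.cos φ) ^ 2 * (1 - Real.sin φ) - 1 ≤ Kact ∧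
    0 < 2 * (1 / Real.cos φ) ^ 2 * (1 - Real.sin φ) - 1 ∧
    0 < Kact ∧ 0 < Kpass := by
  intro Kact Kpass
  have hφ : 0 ≤ φ := h0.trans h1
  have hcosφ : cos φ ≠ 0 := (cos_pos_of_mem_Ioo ⟨by linarith [pi_pos], h2⟩).ne'
  have hcosδ : cos δ ≠ 0 := (cos_pos_of_mem_Ioo ⟨by linarith [pi_pos], by linarith⟩).ne'
  have hsqrt : √(1 - cos φ ^ 2 * (1 / cos δ) ^ 2) ≤ sin φ := by
    have := sqrt_one_sub_cos_sq_mul_inv_cos_sq_le_abs_sin φ hcosδ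
    rwa [abs_of_nonneg (sin_nonneg_of_nonneg_of_le_pi hφ (by linarith))] at this
  have hbound : 2 * (1 / cos φ) ^ 2 * (1 - sin φ) - 1 ≤ Kact := by
    simp only [Kact]
    gcongr
  have hpos : 0 < 2 * (1 / cos φ) ^ 2 * (1 - sin φ) - 1 := by
    have hsin := abs_lt.mp (abs_sin_lt_one_of_cos_ne_zero hcosφ)
    rw [two_mul_inv_cos_sq_mul_one_sub_sin_sub_one hcosφ]
    exact div_pos (by linarith) (by linarith)
  have hact_le_pass : Kact ≤ Kpass := by
    simp only [Kact, Kpass]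
    gcongr
    linarith [sqrt_nonneg (1 - cos φ ^ 2 * (1 / cos δ) ^ 2)]
  exact ⟨hbound, hpos, hpos.trans_le hbound, (hpos.trans_le hbound).trans_le hact_le_pass⟩
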